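/- With Γ̃ as in the main construction, let y ∈ M_{Γ̃} with (supp y) ∩ ({i} × Γ₀) ≠ ∅ and supp y ⊆ ⋃_{j≥i}({j} × Γ₀). Then the cyclic submodule y·F_{Γ̃} contains M_{≥i+1} = {z ∈ M_{Γ̃} : supp z ⊆ ⋃_{j≥i+1}({j} × Γ₀)}. -/

import Mathlib

open scoped BigOperators Classical

/-- The formal monoid algebra `K⟨⟨C⟩⟩` is modeled as functions `FreeMonoid C → K`.
This is its convolution multiplication. -/
noncomputable def fmaMul {K C : Type*} [Field K] (f g : FreeMonoid C → K) :
    FreeMonoid C → K :=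
  fun c => ∑ᶠ p : FreeMonoid C × FreeMonoid C,
    if p.1 * p.2 = c then f p.1 * g p.2 else 0

/-- The identity element of `K⟨⟨C⟩⟩`. -/
noncomputable def fmaOne {K C : Type*} [Field K] : FreeMonoid C → K :=
  fun c => if c = 1 then 1 else 0

/-- The support of an element of `K⟨⟨C⟩⟩`. -/
def fmaSupp {K C : Type*} [Field K] (f : FreeMonoid C → K) : Set (FreeMonoid C) :=
  {c | f c ≠ 0}

/-- A colored quiver `Γ = (Γ₀, Γ₁, C, s, t, u)`. -/
structure ColoredQuiver where
  V : Type
  A : Type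
  Cl : Type
  s : A → V
  t : A → V
  u : A → Cl

/-- Paths in a colored quiver, from a source vertex to a target vertex. -/
inductive CQPath (Γ : ColoredQuiver) : Γ.V → Γ.V → Type
  | nil (v : Γ.V) : CQPath Γ v v
  | cons (r : Γ.A) {w : Γ.V} (p : CQPath Γ (Γ.t r) w) : CQPath Γ (Γ.s r) w

/-- The sequence of colors of a path, as an element of the free monoid on colors. -/
def CQPath.colors {Γ : ColoredQuiver} : ∀ {v w : Γ.V}, CQPath Γ v w → FreeMonoid Γ.Cl
  | _, _, .nil _ => 1
  | _, _, .cons r p => FreeMonoid.of (Γ.u r) * p.colors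

/-- Concatenation of paths. -/
def CQPath.comp {Γ : ColoredQuiver} :
    ∀ {a b c : Γ.V}, CQPath Γ a b → CQPath Γ b c → CQPath Γ a c
  | _, _, _, .nil _, q => q
  | _, _, _, .cons r p, q => .cons r (p.comp q)

/-- `P_v(B)`: the set of paths with target `v` whose color sequence lies in `B`
(paths are recorded together with their source vertex). -/
def pathsTo (Γ : ColoredQuiver) (v : Γ.V) (B : Set (FreeMonoid Γ.Cl)) :
    Set (Σ w : Γ.V, CQPath Γ w v) :=
  {p | p.2.colors ∈ B}

/-- An element of `K⟨⟨C⟩⟩` is admissible if `P_v(supp f)` is finite for every vertex. -/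
def Admissible {K : Type*} [Field K] (Γ : ColoredQuiver) (f : FreeMonoid Γ.Cl → K) : Prop :=
  ∀ v : Γ.V, (pathsTo Γ v (fmaSupp f)).Finite

/-- The action of `f ∈ K⟨⟨C⟩⟩` on `y ∈ M_Γ = ∏_v K x_v`:
`(y·f)(t(r)) = ∑_r λ_{u(r)} μ_{s(r)}`, the sum running over paths `r`
(well defined when `f` is admissible). -/
noncomputable def cqAct {K : Type*} [Field K] {Γ : ColoredQuiver} (y : Γ.V → K)
    (f : FreeMonoid Γ.Cl → K) : Γ.V → K :=
  fun w => ∑ᶠ p : Σ a : Γ.V, CQPath Γ a w, f p.2.colors * y p.1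

/-- The extended colored quiver `Γ̃` of `Γ`: vertices `ℕ × Γ₀`, a copy of the arrows of `Γ`
on each level, and new arrows `r^i_{v,w} : (i,v) → (i+1,w)` with fresh pairwise distinct
colors `c_{v,w}`. -/
def extQuiver (Γ : ColoredQuiver) : ColoredQuiver where
  V := ℕ × Γ.V
  A := (ℕ × Γ.A) ⊕ (ℕ × Γ.V × Γ.V)
  Cl := Γ.Cl ⊕ (Γ.V × Γ.V)
  s := fun a => match a with
    | .inl (i, r) => (i, Γ.s r)
    | .inr (i, v, _) => (i, v)
  t := fun a => match a with
    | .inl (i, r) => (i, Γ.t r)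
    | .inr (i, _, w) => (i + 1, w)
  u := fun a => match a with
    | .inl (_, r) => .inl (Γ.u r)
    | .inr (_, v, w) => .inr (v, w)

/-!
Choose `u` with `y (i, u) ≠ 0` and look for `f` supported on the words `c_{u,u}^d c_{u,v}`.
In `Γ̃` the only path with this color sequence that ends at `(m, v)` is the ladder
`(m-d-1, u) → ⋯ → (m-1, u) → (m, v)`, so if `f` has coefficient `a_v(d)` at that word then
`(y·f)(m, v) = ∑_{d<m} a_v(d) y(m-d-1, u)`. Asking this to be `z(m, v)` for all `m` is the
power-series equation `X · A_v · Y = Z_v` with `Y = ∑ₖ y(k, u) Xᵏ` of order exactly `i` and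
`Z_v = ∑ₖ z(k, v) Xᵏ` of order `> i`; it is solvable because `X · Y ∣ Z_v` in `K⟦X⟧`.
The paper's successive corrections compute the coefficients of `A_v = Z_v / (X · Y)`.
-/

open Finset PowerSeries

theorem FreeMonoid.of_mul_eq_of_mul_iff {α : Type*} {x y : α} {a b : FreeMonoid α} :
    of x * a = of y * b ↔ x = y ∧ a = b := by
  rw [← toList.injective.eq_iff, toList_of_mul, toList_of_mul, List.cons.injEq,
    toList.injective.eq_iff]

namespace PowerSeries

theorem coeff_X_mul_mul {R : Type*} [CommSemiring R] (A Y : R⟦X⟧) (m : ℕ) :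
    coeff m (X * A * Y) = ∑ d ∈ range m, coeff d A * coeff (m - (d + 1)) Y := by
  cases m with
  | zero => simp
  | succ n =>
    rw [mul_assoc, coeff_succ_X_mul, coeff_mul, Nat.sum_antidiagonal_eq_sum_range_succ_mk]
    simp only [Nat.add_sub_add_right]

section Field

variable {K : Type*} [Field K]

theorem X_mul_dvd_of_coeff {Y Z : K⟦X⟧} {i : ℕ} (hY : ∀ k < i, coeff k Y = 0)
    (hYi : coeff i Y ≠ 0) (hZ : ∀ k ≤ i, coeff k Z = 0) : X * Y ∣ Z := by
  obtain ⟨Y', rfl⟩ := X_pow_dvd_iff.2 hY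
  obtain ⟨Z', rfl⟩ := X_pow_dvd_iff.2 fun k hk => hZ k (Nat.lt_succ_iff.1 hk)
  have hY' : constantCoeff Y' ≠ 0 := by
    simpa [coeff_X_pow_mul'] using hYi
  refine ⟨Z' * Y'⁻¹, ?_⟩
  calc X ^ (i + 1) * Z' = X ^ (i + 1) * Z' * (Y' * Y'⁻¹) := by
        rw [PowerSeries.mul_inv_cancel Y' hY', mul_one]
    _ = X * (X ^ i * Y') * (Z' * Y'⁻¹) := by ring

end Field

end PowerSeries

theorem exists_sum_range_mul_eq {K : Type*} [Field K] {y z : ℕ → K} {i : ℕ} (hyi : y i ≠ 0)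
    (hy : ∀ k < i, y k = 0) (hz : ∀ k ≤ i, z k = 0) :
    ∃ a : ℕ → K, ∀ m, ∑ d ∈ range m, a d * y (m - (d + 1)) = z m := by
  obtain ⟨A, hA⟩ := X_mul_dvd_of_coeff (Y := mk y) (Z := mk z) (by simpa using hy)
    (by simpa using hyi) (by simpa using hz)
  refine ⟨fun d => coeff d A, fun m => ?_⟩
  have := coeff_X_mul_mul A (mk y) m
  rw [mul_right_comm, ← hA, coeff_mk] at this
  simpa only [coeff_mk] using this.symm

theorem CQPath.eq_of_colors_eq_one {Γ : ColoredQuiver} {a b : Γ.V} (p : CQPath Γ a b)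
    (hp : p.colors = 1) : a = b := by
  cases p with
  | nil => rfl
  | cons r q => exact absurd hp (by simp [CQPath.colors])

namespace extQuiver

variable {Γ : ColoredQuiver}

-- `r^j_{v,w}` and `c_{v,w}` in the paper's notation.
def newArrow (j : ℕ) (v w : Γ.V) : (extQuiver Γ).A := Sum.inr (j, v, w)

def newColor (v w : Γ.V) : (extQuiver Γ).Cl := Sum.inr (v, w)

theorem exists_eq_newArrow {r : (extQuiver Γ).A} {v w : Γ.V}
    (h : (extQuiver Γ).u r = newColor v w) : ∃ j, r = newArrow j v w := by
  rcases r with ⟨j, r₀⟩ | ⟨j, v', w'⟩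
  · cases h
  · cases h
    exact ⟨j, rfl⟩

def ladderWord (u v : Γ.V) (d : ℕ) : FreeMonoid (extQuiver Γ).Cl :=
  FreeMonoid.of (newColor u u) ^ d * FreeMonoid.of (newColor u v)

theorem ladderWord_zero (u v : Γ.V) : ladderWord u v 0 = FreeMonoid.of (newColor u v) :=
  one_mul _

theorem ladderWord_succ (u v : Γ.V) (d : ℕ) :
    ladderWord u v (d + 1) = FreeMonoid.of (newColor u u) * ladderWord u v d := by
  rw [ladderWord, ladderWord, pow_succ', mul_assoc]

theorem ladderWord_ne_one (u v : Γ.V) (d : ℕ) : ladderWord u v d ≠ 1 := fun h => by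
  simpa [ladderWord, FreeMonoid.length_mul] using congrArg FreeMonoid.length h

theorem isRight_of_mem_ladderWord {u v : Γ.V} {c : (extQuiver Γ).Cl} :
    ∀ {d : ℕ}, c ∈ ladderWord u v d → c.isRight
  | 0, h => by
    rw [ladderWord_zero, FreeMonoid.mem_of] at h
    rw [h]; rfl
  | d + 1, h => by
    rw [ladderWord_succ, FreeMonoid.mem_mul, FreeMonoid.mem_of] at h
    rcases h with rfl | h
    · rfl
    · exact isRight_of_mem_ladderWord h

theorem exists_path_colors_eq_ladderWord (u v : Γ.V) :
    ∀ d j : ℕ, ∃ p : CQPath (extQuiver Γ) (j, u) (j + d + 1, v), p.colors = ladderWord u v d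
  | 0, j => ⟨.cons (newArrow j u v) (.nil _), by
      simp only [ladderWord_zero, CQPath.colors, mul_one]; rfl⟩
  | d + 1, j => by
    obtain ⟨p, hp⟩ := exists_path_colors_eq_ladderWord u v d (j + 1)
    rw [show j + (d + 1) + 1 = j + 1 + d + 1 by omega]
    exact ⟨.cons (newArrow j u u) p, by rw [ladderWord_succ, ← hp]; rfl⟩

theorem ends_of_colors_eq_ladderWord {u v : Γ.V} {a b : (extQuiver Γ).V}
    (p : CQPath (extQuiver Γ) a b) {d : ℕ} (hp : p.colors = ladderWord u v d) :
    a.2 = u ∧ b = (a.1 + d + 1, v) := by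
  induction p generalizing d with
  | nil => exact absurd hp.symm (ladderWord_ne_one u v d)
  | cons r q ih =>
    change FreeMonoid.of _ * q.colors = _ at hp
    cases d with
    | zero =>
      rw [ladderWord_zero, ← mul_one (FreeMonoid.of (newColor u v)),
        FreeMonoid.of_mul_eq_of_mul_iff] at hp
      obtain ⟨j, rfl⟩ := exists_eq_newArrow hp.1
      cases q.eq_of_colors_eq_one hp.2
      exact ⟨rfl, rfl⟩
    | succ d =>
      rw [ladderWord_succ, FreeMonoid.of_mul_eq_of_mul_iff] at hp
      obtain ⟨j, rfl⟩ := exists_eq_newArrow hp.1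
      obtain ⟨-, rfl⟩ := ih hp.2
      refine ⟨rfl, ?_⟩
      change (j + 1 + d + 1, v) = (j + (d + 1) + 1, v)
      congr 1
      omega

-- A new arrow is determined by its color and its target, so such a path is determined backwards.
theorem sigma_path_eq_of_colors_eq {b : (extQuiver Γ).V} :
    ∀ {p q : Σ a, CQPath (extQuiver Γ) a b}, (∀ c ∈ p.2.colors, c.isRight) →
      p.2.colors = q.2.colors → p = q := by
  rintro ⟨a, p⟩ ⟨a', q⟩ hnew h
  induction p generalizing a' with
  | nil =>
    cases q with
    | nil => rfl
    | cons r' q => exact absurd h.symm (by simp [CQPath.colors])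
  | cons r p ih =>
    cases q with
    | nil => exact absurd h (by simp [CQPath.colors])
    | cons r' q =>
      change FreeMonoid.of _ * p.colors = FreeMonoid.of _ * q.colors at h
      change ∀ c ∈ FreeMonoid.of _ * p.colors, _ at hnew
      rw [FreeMonoid.of_mul_eq_of_mul_iff] at h
      have hr := hnew _ (FreeMonoid.mem_mul.2 (Or.inl FreeMonoid.mem_of_self))
      rcases r with ⟨j, r₀⟩ | ⟨j, v, w⟩
      · cases hr
      obtain ⟨j', rfl⟩ := exists_eq_newArrow (v := v) (w := w) h.1.symm
      have hpq := ih _ q (fun c hc => hnew c (FreeMonoid.mem_mul.2 (Or.inr hc))) h.2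
      obtain ⟨hj, hpq⟩ := Sigma.mk.inj hpq
      cases (Nat.succ_injective (congrArg Prod.fst hj) : j = j')
      cases eq_of_heq hpq
      rfl

theorem ladderWord_injective (u : Γ.V) :
    Function.Injective fun dv : ℕ × Γ.V => ladderWord u dv.2 dv.1 := by
  rintro ⟨d, v⟩ ⟨d', v'⟩ h
  obtain ⟨p, hp⟩ := exists_path_colors_eq_ladderWord u v d 0
  obtain ⟨hd, hv⟩ := Prod.mk.inj (ends_of_colors_eq_ladderWord p (hp.trans h)).2
  exact Prod.ext (show d = d' by omega) hv

theorem exists_path_to_colors_eq_ladderWord (u v : Γ.V) {m : ℕ} (d : Fin m) :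
    ∃ p : CQPath (extQuiver Γ) (m - (d + 1), u) (m, v), p.colors = ladderWord u v d := by
  have h := exists_path_colors_eq_ladderWord u v d (m - (d + 1))
  rwa [show m - (d + 1) + d + 1 = m by omega] at h

noncomputable def ladderPath (u v : Γ.V) {m : ℕ} (d : Fin m) :
    Σ a : (extQuiver Γ).V, CQPath (extQuiver Γ) a (m, v) :=
  ⟨_, (exists_path_to_colors_eq_ladderWord u v d).choose⟩

theorem ladderPath_fst (u v : Γ.V) {m : ℕ} (d : Fin m) :
    (ladderPath u v d).1 = (m - (d + 1), u) := rfl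

theorem colors_ladderPath (u v : Γ.V) {m : ℕ} (d : Fin m) :
    (ladderPath u v d).2.colors = ladderWord u v d :=
  (exists_path_to_colors_eq_ladderWord u v d).choose_spec

theorem ladderPath_injective (u v : Γ.V) (m : ℕ) :
    Function.Injective (ladderPath (Γ := Γ) u v (m := m)) := fun d d' h => by
  have := congrArg (·.1.1) h
  simp only [ladderPath_fst] at this
  omega

theorem mem_range_ladderPath {u v v' : Γ.V} {m d : ℕ}
    {p : Σ a, CQPath (extQuiver Γ) a (m, v)} (hp : p.2.colors = ladderWord u v' d) :
    p ∈ Set.range (ladderPath u v) := by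
  obtain ⟨-, hm⟩ := ends_of_colors_eq_ladderWord p.2 hp
  obtain ⟨hm, rfl⟩ := Prod.mk.inj hm
  refine ⟨⟨d, by omega⟩, sigma_path_eq_of_colors_eq (fun c hc => ?_) ?_⟩
  · rw [colors_ladderPath] at hc
    exact isRight_of_mem_ladderWord hc
  · rw [colors_ladderPath, hp]

theorem finsum_paths_to_eq_sum_ladderWord {M : Type*} [AddCommMonoid M] (u v : Γ.V) (m : ℕ)
    (F : FreeMonoid (extQuiver Γ).Cl → (extQuiver Γ).V → M)
    (hF : ∀ w a, F w a ≠ 0 → ∃ d v', w = ladderWord u v' d) :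
    ∑ᶠ p : Σ a, CQPath (extQuiver Γ) a (m, v), F p.2.colors p.1 =
      ∑ d ∈ range m, F (ladderWord u v d) (m - (d + 1), u) := by
  rw [finsum_eq_sum_of_support_subset _ (s := univ.image (ladderPath u v)),
    sum_image fun d _ d' _ h => ladderPath_injective u v m h, ← Fin.sum_univ_eq_sum_range]
  · exact sum_congr rfl fun d _ => by rw [colors_ladderPath, ladderPath_fst]
  · intro p hp
    obtain ⟨d, v', hw⟩ := hF _ _ hp
    obtain ⟨k, rfl⟩ := mem_range_ladderPath hw
    simp

theorem finite_pathsTo_range_ladderWord (u : Γ.V) (b : (extQuiver Γ).V) :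
    (pathsTo (extQuiver Γ) b
      (Set.range fun dv : ℕ × Γ.V => ladderWord u dv.2 dv.1)).Finite := by
  obtain ⟨m, v⟩ := b
  refine (Set.finite_range (ladderPath u v (m := m))).subset ?_
  rintro p ⟨⟨d, v'⟩, hp⟩
  exact mem_range_ladderPath hp.symm

-- The formal sum `∑_{d,v} a d v • c_{u,u}^d c_{u,v}`.
noncomputable def ladderSeries {K : Type*} [Zero K] (u : Γ.V) (a : ℕ → Γ.V → K) :
    FreeMonoid (extQuiver Γ).Cl → K :=
  Function.extend (fun dv : ℕ × Γ.V => ladderWord u dv.2 dv.1) (fun dv => a dv.1 dv.2) 0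

variable {K : Type*}

theorem ladderSeries_ladderWord [Zero K] (u v : Γ.V) (a : ℕ → Γ.V → K) (d : ℕ) :
    ladderSeries u a (ladderWord u v d) = a d v :=
  (ladderWord_injective u).extend_apply _ _ (d, v)

theorem exists_eq_ladderWord_of_ladderSeries_ne_zero [Zero K] {u : Γ.V} {a : ℕ → Γ.V → K}
    {w : FreeMonoid (extQuiver Γ).Cl} (hw : ladderSeries u a w ≠ 0) :
    ∃ d v, w = ladderWord u v d := by
  by_contra h
  refine hw (Function.extend_apply' _ _ w ?_)
  rintro ⟨⟨d, v⟩, rfl⟩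
  exact h ⟨d, v, rfl⟩

theorem admissible_ladderSeries [Field K] (u : Γ.V) (a : ℕ → Γ.V → K) :
    Admissible (extQuiver Γ) (ladderSeries u a) := fun b =>
  (finite_pathsTo_range_ladderWord u b).subset fun _ hp => by
    obtain ⟨d, v, hw⟩ := exists_eq_ladderWord_of_ladderSeries_ne_zero hp
    exact ⟨(d, v), hw.symm⟩

theorem cqAct_ladderSeries [Field K] (y : (extQuiver Γ).V → K) (u : Γ.V)
    (a : ℕ → Γ.V → K) (m : ℕ) (v : Γ.V) :
    cqAct y (ladderSeries u a) (m, v) = ∑ d ∈ range m, a d v * y (m - (d + 1), u) := by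
  unfold cqAct
  rw [finsum_paths_to_eq_sum_ladderWord u v m (fun w b => ladderSeries u a w * y b)
    fun w b h => exists_eq_ladderWord_of_ladderSeries_ne_zero (left_ne_zero_of_mul h)]
  simp only [ladderSeries_ladderWord]

end extQuiver

/-- if `y ∈ M_{Γ̃}` is supported in levels `≥ i` and its support meets
level `i`, then the cyclic submodule `y·F_{Γ̃}` contains `M_{≥ i+1}`. -/
theorem cyclic_contains_tail (K : Type*) [Field K] (Γ : ColoredQuiver) (i : ℕ)
    (y : (extQuiver Γ).V → K)
    (h1 : ∃ v : Γ.V, y (i, v) ≠ 0)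
    (h2 : ∀ p : ℕ × Γ.V, y p ≠ 0 → i ≤ p.1) :
    ∀ z : (extQuiver Γ).V → K, (∀ p : ℕ × Γ.V, z p ≠ 0 → i + 1 ≤ p.1) →
      ∃ f : FreeMonoid (extQuiver Γ).Cl → K,
        Admissible (extQuiver Γ) f ∧ cqAct y f = z := by
  obtain ⟨u, hu⟩ := h1
  intro z hz
  have hy : ∀ k < i, y (k, u) = 0 := fun k hk => not_not.1 fun h => (h2 _ h).not_gt hk
  have hz' : ∀ v, ∀ k ≤ i, z (k, v) = 0 := fun v k hk =>
    not_not.1 fun h => (hz _ h).not_gt (Nat.lt_succ_of_le hk)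
  choose a ha using fun v => exists_sum_range_mul_eq (z := fun k => z (k, v)) hu hy (hz' v)
  refine ⟨extQuiver.ladderSeries u (fun d v => a v d),
    extQuiver.admissible_ladderSeries u _, ?_⟩
  funext ⟨m, v⟩
  rw [extQuiver.cqAct_ladderSeries]
  exact ha v m
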